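/- For α_k ∈ (0, 2), with the choices α = α_k/(100 + 5α_k), β = 4α_k/(100 + 5α_k), γ = 100/(100 + 5α_k) (so α + β + γ = 1), the minimum of the five quantities α_k + (2 - α_k)α, α_k(1 + β/2 + γ/2 - α) - 3α, -3α/2 + 3(β + γ), α_k(1 - α - β/2) + 5β/2 - 3α, and α_k(1 + γ/2 - α - β/2) - 3α - 2β equals ((102 + 4α_k)/(100 + 5α_k))·α_k, and this value lies strictly between α_k and 2. -/

import Mathlib

open Set

/-!
With `d = 100 + 5 α_k`, each of the five exponents is the target `T = (102 + 4 α_k) α_k / d`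
plus a rational function of `α_k` with denominator `d`: the first exponent equals the
target, and the other four excesses, `α_k (45 + 2α_k)/d`, `(600 - 183α_k - 8α_k²)/(2d)`,
`α_k (5 - 2α_k)/d` and `α_k (37 - 2α_k)/d`, are nonnegative on `(0, 2)`. The bounds come
from `T - α_k = α_k (2 - α_k)/d` and `2 - T = 4 (2 - α_k)(25 + α_k)/d`.
-/

section ExponentIdentities

variable {t : ℝ}

lemma weights_sum_eq_one (ht : 0 < t) :
    t / (100 + 5 * t) + 4 * t / (100 + 5 * t) + 100 / (100 + 5 * t) = 1 := by
  field_simp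
  ring

lemma exponent₁_eq (ht : 0 < t) :
    t + (2 - t) * (t / (100 + 5 * t)) = (102 + 4 * t) / (100 + 5 * t) * t := by
  field_simp
  ring

lemma exponent₂_eq (ht : 0 < t) :
    t * (1 + 4 * t / (100 + 5 * t) / 2 + 100 / (100 + 5 * t) / 2 - t / (100 + 5 * t))
        - 3 * (t / (100 + 5 * t))
      = (102 + 4 * t) / (100 + 5 * t) * t + t * (45 + 2 * t) / (100 + 5 * t) := by
  field_simp
  ring

lemma exponent₃_eq (ht : 0 < t) :
    -(3 * (t / (100 + 5 * t))) / 2 + 3 * (4 * t / (100 + 5 * t) + 100 / (100 + 5 * t))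
      = (102 + 4 * t) / (100 + 5 * t) * t
        + (600 - 183 * t - 8 * t ^ 2) / (2 * (100 + 5 * t)) := by
  field_simp
  ring

lemma exponent₄_eq (ht : 0 < t) :
    t * (1 - t / (100 + 5 * t) - 4 * t / (100 + 5 * t) / 2)
        + 5 * (4 * t / (100 + 5 * t)) / 2 - 3 * (t / (100 + 5 * t))
      = (102 + 4 * t) / (100 + 5 * t) * t + t * (5 - 2 * t) / (100 + 5 * t) := by
  field_simp
  ring

lemma exponent₅_eq (ht : 0 < t) :
    t * (1 + 100 / (100 + 5 * t) / 2 - t / (100 + 5 * t) - 4 * t / (100 + 5 * t) / 2)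
        - 3 * (t / (100 + 5 * t)) - 2 * (4 * t / (100 + 5 * t))
      = (102 + 4 * t) / (100 + 5 * t) * t + t * (37 - 2 * t) / (100 + 5 * t) := by
  field_simp
  ring

lemma target_sub_self (ht : 0 < t) :
    (102 + 4 * t) / (100 + 5 * t) * t - t = t * (2 - t) / (100 + 5 * t) := by
  field_simp
  ring

lemma two_sub_target (ht : 0 < t) :
    2 - (102 + 4 * t) / (100 + 5 * t) * t = 4 * (2 - t) * (25 + t) / (100 + 5 * t) := by
  field_simp
  ring

end ExponentIdentities

/-- The exponent improvement computation: for `α_k ∈ (0,2)` and the choices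
`a = α_k/(100+5α_k)`, `b = 4α_k/(100+5α_k)`, `c = 100/(100+5α_k)` (so `a+b+c = 1`),
the minimum of the five exponents equals `((102+4α_k)/(100+5α_k))·α_k`, which lies
strictly between `α_k` and `2`. -/
theorem exponent_min (ak a b c : ℝ) (hak : ak ∈ Ioo (0 : ℝ) 2)
    (ha : a = ak / (100 + 5 * ak)) (hb : b = 4 * ak / (100 + 5 * ak))
    (hc : c = 100 / (100 + 5 * ak)) :
    a + b + c = 1 ∧
    min (ak + (2 - ak) * a)
      (min (ak * (1 + b / 2 + c / 2 - a) - 3 * a)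
        (min (-(3 * a) / 2 + 3 * (b + c))
          (min (ak * (1 - a - b / 2) + 5 * b / 2 - 3 * a)
            (ak * (1 + c / 2 - a - b / 2) - 3 * a - 2 * b))))
      = ((102 + 4 * ak) / (100 + 5 * ak)) * ak ∧
    ak < ((102 + 4 * ak) / (100 + 5 * ak)) * ak ∧
    ((102 + 4 * ak) / (100 + 5 * ak)) * ak < 2 := by
  obtain ⟨h0, h2⟩ := hak
  have hd : 0 < 100 + 5 * ak := by linarith
  subst ha hb hc
  refine ⟨weights_sum_eq_one h0, ?_, ?_, ?_⟩
  · rw [exponent₁_eq h0, exponent₂_eq h0, exponent₃_eq h0, exponent₄_eq h0,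
      exponent₅_eq h0]
    refine min_eq_left (le_min ?_ (le_min ?_ (le_min ?_ ?_))) <;>
      refine le_add_of_nonneg_right (div_nonneg ?_ (by positivity))
    · positivity
    · nlinarith
    · exact mul_nonneg h0.le (by linarith)
    · exact mul_nonneg h0.le (by linarith)
  · rw [← sub_pos, target_sub_self h0]
    exact div_pos (mul_pos h0 (by linarith)) hd
  · rw [← sub_pos, two_sub_target h0]
    exact div_pos (mul_pos (mul_pos four_pos (by linarith)) (by linarith)) hd
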